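/- In the field F = ℚ(p, x₁, x₂, x₃) one has the identity ω(0,1) + p³·ω(1,2) + p²·x₁x₂x₃·ω(1,1) + (p²−1)·ω(1,1) + (p²−1)·(x₁x₂x₃/p²)·ω(0,1) + (p³−p²)(p²+p+1)·(x₁x₂x₃/p⁶) = ((p²−1)/p³)(sym_{2,1,1}+sym_{1,1,0}) + (1/p)(sym_{2,2,1}+sym_{2,1,0}+sym_{1,0,0}) + ((p−1)(3p²+2p+1)/p⁴)·sym_{1,1,1}. (The left-hand side is Ω(T₁(p²))/x₀², Andrianov's formula Ω(T_i(p²)) = Σ_{a+b≤3, a≥i} p^{b(a+b+1)} sm_p(a−i,a) x₀² ω(π_{a,b}) for i = 1, using sm_p(0,a) = 1, sm_p(1,2) = p²−1, sm_p(2,3) = (p³−p²)(p²+p+1), and homogeneity ω(t(p·d)) = (x₁x₂x₃/p⁶)ω(t(d)).) -/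

import Mathlib

/-! Common setup: the field `F = ℚ(p, x₁, x₂, x₃)`, realized as the fraction field of the
polynomial ring `ℚ[p, x₁, x₂, x₃]`.  `p` is the variable of index `0`, and `x i` (for
`i : Fin 3`) are the variables `x₁, x₂, x₃`. -/

noncomputable section

/-- The rational function field `ℚ(p, x₁, x₂, x₃)`. -/
abbrev F : Type := FractionRing (MvPolynomial (Fin 4) ℚ)

/-- The indeterminate `p`. -/
def p : F := algebraMap (MvPolynomial (Fin 4) ℚ) F (MvPolynomial.X 0)

/-- The indeterminates `x₁, x₂, x₃` (as `x 0, x 1, x 2`). -/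
def x (i : Fin 3) : F := algebraMap (MvPolynomial (Fin 4) ℚ) F (MvPolynomial.X i.succ)

/-- The monomial symmetric polynomial `sym_{a,b,c}` in `x₁, x₂, x₃`: the sum of all *distinct*
monomials obtained from `x₁^a x₂^b x₃^c` by permuting the variables. -/
def sym (a b c : ℕ) : F :=
  ∑ e ∈ Finset.univ.image (fun σ : Equiv.Perm (Fin 3) => (![a, b, c]) ∘ σ),
    ∏ j, x j ^ e j

/-- Andrianov's formula for the Satake spherical image `ω(λ,μ) = ω(t(1, p^λ, p^μ))`
of the `GL₃` Hecke operator `t(1, p^λ, p^μ)`, for `0 ≤ λ ≤ μ`. -/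
def ω (l m : ℕ) : F :=
  ((if l = 0 ∧ m = 0 then p ^ 3 / ((p + 1) * (p ^ 2 + p + 1))
    else if l = 0 ∨ l = m then p / (p + 1)
    else 1) / p ^ (2 * l + m)) *
  ∑ σ : Equiv.Perm (Fin 3),
    x (σ 1) ^ l * x (σ 2) ^ m *
      ((x (σ 1) - x (σ 0) / p) * (x (σ 2) - x (σ 0) / p) * (x (σ 2) - x (σ 1) / p)) /
      ((x (σ 1) - x (σ 0)) * (x (σ 2) - x (σ 0)) * (x (σ 2) - x (σ 1)))

/-! The denominator of the `σ`-summand of `ω` is the Vandermonde product `Δ` of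
`x₁, x₂, x₃` permuted by `σ`, that is `sign σ · Δ`, so `ω(λ, μ)` is a constant times an
alternating sum divided by `Δ`. For the three operators involved this gives the closed forms
`ω(0,1) = sym_{1,0,0}/p`, `ω(1,1) = sym_{1,1,0}/p³` and
`ω(1,2) = (p² sym_{2,1,0} + (2p+1)(p-1) sym_{1,1,1})/p⁶`,
after which the identity is one between rational functions in `p, x₁, x₂, x₃`. -/

open Equiv Matrix

lemma det_vandermonde_fin_three {R : Type*} [CommRing R] (v : Fin 3 → R) :
    (vandermonde v).det = (v 1 - v 0) * (v 2 - v 0) * (v 2 - v 1) := by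
  rw [det_vandermonde, Fin.prod_univ_three, show Finset.Ioi (0 : Fin 3) = {1, 2} by decide,
    show Finset.Ioi (1 : Fin 3) = {2} by decide, show Finset.Ioi (2 : Fin 3) = ∅ by decide]
  simp

lemma vandermonde_prod_perm_fin_three {R : Type*} [CommRing R] (v : Fin 3 → R)
    (σ : Perm (Fin 3)) :
    (v (σ 1) - v (σ 0)) * (v (σ 2) - v (σ 0)) * (v (σ 2) - v (σ 1))
      = Perm.sign σ * ((v 1 - v 0) * (v 2 - v 0) * (v 2 - v 1)) := by
  have h := det_permute σ (vandermonde v)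
  rwa [show (vandermonde v).submatrix σ id = vandermonde (v ∘ σ) from rfl,
    det_vandermonde_fin_three, det_vandermonde_fin_three] at h

lemma sum_sign_mul_perm_fin_three {R : Type*} [CommRing R] (f : Fin 3 → Fin 3 → Fin 3 → R) :
    ∑ σ : Perm (Fin 3), (Perm.sign σ : R) * f (σ 0) (σ 1) (σ 2)
      = f 0 1 2 - f 1 0 2 - f 2 1 0 - f 0 2 1 + f 1 2 0 + f 2 0 1 := by
  rw [show (Finset.univ : Finset (Perm (Fin 3))) =
      {1, swap 0 1, swap 0 2, swap 1 2, swap 0 1 * swap 1 2, swap 0 2 * swap 1 2} by decide,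
    Finset.sum_insert (by decide), Finset.sum_insert (by decide), Finset.sum_insert (by decide),
    Finset.sum_insert (by decide), Finset.sum_insert (by decide), Finset.sum_singleton]
  simp only [Perm.coe_one, Perm.coe_mul, id_eq, Function.comp_apply, swap_apply_left,
    swap_apply_right, swap_apply_of_ne_of_ne, ne_eq, Fin.reduceEq, not_false_eq_true,
    Perm.sign_one, Perm.sign_mul, Perm.sign_swap', zero_ne_one, one_ne_zero, ↓reduceIte,
    Units.val_one, Units.val_neg, Units.val_mul, Int.cast_one, Int.cast_neg, Int.cast_mul]
  ring

lemma p_ne_zero : p ≠ 0 := by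
  simp [p, MvPolynomial.X_ne_zero]

lemma p_add_one_ne_zero : p + 1 ≠ 0 := by
  rw [p, ← map_one (algebraMap (MvPolynomial (Fin 4) ℚ) F), ← map_add,
    map_ne_zero_iff _ (IsFractionRing.injective _ F)]
  intro h
  simpa using congrArg (MvPolynomial.coeff 0) h

lemma x_injective : Function.Injective x :=
  fun _ _ h => Fin.succ_injective 3 (MvPolynomial.X_injective (IsFractionRing.injective _ F h))

lemma vandermonde_x_ne_zero : (x 1 - x 0) * (x 2 - x 0) * (x 2 - x 1) ≠ 0 := by
  simp only [ne_eq, mul_eq_zero, sub_eq_zero, x_injective.eq_iff]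
  decide

def andrianovTerm (l m : ℕ) (a b c : Fin 3) : F :=
  x b ^ l * x c ^ m * ((x b - x a / p) * (x c - x a / p) * (x c - x b / p))

lemma ω_eq_alternating_sum (l m : ℕ) :
    ω l m = ((if l = 0 ∧ m = 0 then p ^ 3 / ((p + 1) * (p ^ 2 + p + 1))
      else if l = 0 ∨ l = m then p / (p + 1) else 1) / p ^ (2 * l + m)) *
    (∑ σ : Perm (Fin 3), (Perm.sign σ : F) * andrianovTerm l m (σ 0) (σ 1) (σ 2)) /
      ((x 1 - x 0) * (x 2 - x 0) * (x 2 - x 1)) := by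
  rw [ω, mul_div_assoc, Finset.sum_div]
  congr 1
  refine Finset.sum_congr rfl fun σ _ => ?_
  have sign_inv : (Perm.sign σ : F)⁻¹ = Perm.sign σ := by
    refine inv_eq_of_mul_eq_one_right ?_
    rw [← Int.cast_mul, ← Units.val_mul, Int.units_mul_self, Units.val_one, Int.cast_one]
  rw [vandermonde_prod_perm_fin_three x σ, div_mul_eq_div_div, div_eq_mul_inv _ (Perm.sign σ : F),
    sign_inv, mul_comm, andrianovTerm]

lemma ω_zero_one : ω 0 1 = (x 0 + x 1 + x 2) / p := by
  have := p_ne_zero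
  have := p_add_one_ne_zero
  rw [ω_eq_alternating_sum, if_neg (by decide), if_pos (by decide),
    sum_sign_mul_perm_fin_three, div_eq_iff vandermonde_x_ne_zero]
  unfold andrianovTerm
  field_simp
  ring

lemma ω_one_one : ω 1 1 = (x 0 * x 1 + x 0 * x 2 + x 1 * x 2) / p ^ 3 := by
  have := p_ne_zero
  have := p_add_one_ne_zero
  rw [ω_eq_alternating_sum, if_neg (by decide), if_pos (by decide),
    sum_sign_mul_perm_fin_three, div_eq_iff vandermonde_x_ne_zero]
  unfold andrianovTerm
  field_simp
  ring

lemma ω_one_two : ω 1 2 = (p ^ 2 * (x 0 ^ 2 * x 1 + x 0 ^ 2 * x 2 + x 1 ^ 2 * x 0 + x 1 ^ 2 * x 2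
      + x 2 ^ 2 * x 0 + x 2 ^ 2 * x 1) + (2 * p + 1) * (p - 1) * (x 0 * x 1 * x 2)) / p ^ 6 := by
  have := p_ne_zero
  rw [ω_eq_alternating_sum, if_neg (by decide), if_neg (by decide),
    sum_sign_mul_perm_fin_three, div_eq_iff vandermonde_x_ne_zero]
  unfold andrianovTerm
  field_simp
  ring

lemma sym_two_one_one :
    sym 2 1 1 = x 0 ^ 2 * x 1 * x 2 + x 0 * x 1 ^ 2 * x 2 + x 0 * x 1 * x 2 ^ 2 := by
  rw [sym, show Finset.univ.image (fun σ : Perm (Fin 3) => ![2, 1, 1] ∘ σ)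
    = {![2, 1, 1], ![1, 2, 1], ![1, 1, 2]} by decide, Finset.sum_insert (by decide),
    Finset.sum_insert (by decide), Finset.sum_singleton]
  simp only [Fin.prod_univ_three, cons_val_zero, cons_val_one, cons_val]
  ring

lemma sym_one_one_zero : sym 1 1 0 = x 0 * x 1 + x 0 * x 2 + x 1 * x 2 := by
  rw [sym, show Finset.univ.image (fun σ : Perm (Fin 3) => ![1, 1, 0] ∘ σ)
    = {![1, 1, 0], ![1, 0, 1], ![0, 1, 1]} by decide, Finset.sum_insert (by decide),
    Finset.sum_insert (by decide), Finset.sum_singleton]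
  simp only [Fin.prod_univ_three, cons_val_zero, cons_val_one, cons_val]
  ring

lemma sym_two_two_one : sym 2 2 1 = x 0 ^ 2 * x 1 ^ 2 * x 2 + x 0 ^ 2 * x 1 * x 2 ^ 2
    + x 0 * x 1 ^ 2 * x 2 ^ 2 := by
  rw [sym, show Finset.univ.image (fun σ : Perm (Fin 3) => ![2, 2, 1] ∘ σ)
    = {![2, 2, 1], ![2, 1, 2], ![1, 2, 2]} by decide, Finset.sum_insert (by decide),
    Finset.sum_insert (by decide), Finset.sum_singleton]
  simp only [Fin.prod_univ_three, cons_val_zero, cons_val_one, cons_val]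
  ring

lemma sym_two_one_zero : sym 2 1 0 = x 0 ^ 2 * x 1 + x 0 ^ 2 * x 2 + x 1 ^ 2 * x 0
    + x 1 ^ 2 * x 2 + x 2 ^ 2 * x 0 + x 2 ^ 2 * x 1 := by
  rw [sym, show Finset.univ.image (fun σ : Perm (Fin 3) => ![2, 1, 0] ∘ σ)
    = {![2, 1, 0], ![2, 0, 1], ![1, 2, 0], ![0, 2, 1], ![1, 0, 2], ![0, 1, 2]} by decide,
    Finset.sum_insert (by decide), Finset.sum_insert (by decide), Finset.sum_insert (by decide),
    Finset.sum_insert (by decide), Finset.sum_insert (by decide), Finset.sum_singleton]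
  simp only [Fin.prod_univ_three, cons_val_zero, cons_val_one, cons_val]
  ring

lemma sym_one_zero_zero : sym 1 0 0 = x 0 + x 1 + x 2 := by
  rw [sym, show Finset.univ.image (fun σ : Perm (Fin 3) => ![1, 0, 0] ∘ σ)
    = {![1, 0, 0], ![0, 1, 0], ![0, 0, 1]} by decide, Finset.sum_insert (by decide),
    Finset.sum_insert (by decide), Finset.sum_singleton]
  simp only [Fin.prod_univ_three, cons_val_zero, cons_val_one, cons_val]
  ring

lemma sym_one_one_one : sym 1 1 1 = x 0 * x 1 * x 2 := by
  rw [sym, show Finset.univ.image (fun σ : Perm (Fin 3) => ![1, 1, 1] ∘ σ)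
    = {![1, 1, 1]} by decide, Finset.sum_singleton]
  simp [Fin.prod_univ_three]

/-- the identity for `Ω(T₁(p²))/x₀²`. -/
theorem Omega_T1_p2 :
    ω 0 1 + p ^ 3 * ω 1 2 + p ^ 2 * (x 0 * x 1 * x 2) * ω 1 1
      + (p ^ 2 - 1) * ω 1 1 + (p ^ 2 - 1) * (x 0 * x 1 * x 2 / p ^ 2) * ω 0 1
      + (p ^ 3 - p ^ 2) * (p ^ 2 + p + 1) * (x 0 * x 1 * x 2 / p ^ 6)
    = ((p ^ 2 - 1) / p ^ 3) * (sym 2 1 1 + sym 1 1 0)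
      + (1 / p) * (sym 2 2 1 + sym 2 1 0 + sym 1 0 0)
      + ((p - 1) * (3 * p ^ 2 + 2 * p + 1) / p ^ 4) * sym 1 1 1 := by
  rw [ω_zero_one, ω_one_one, ω_one_two, sym_two_one_one, sym_one_one_zero, sym_two_two_one,
    sym_two_one_zero, sym_one_zero_zero, sym_one_one_one]
  have := p_ne_zero
  field_simp
  ring
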